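/- Let q ∈ k^× with q ≠ ±1, and let N ≥ 3 and m ≥ 3. If the generalized Taft algebra T_n(λ,m,0) acts on O_q(M_N(k)) with x acting linearly and nonzero, and with g acting as an element of H ⋊ ⟨τ⟩, then g must act as an element of H, i.e. diagonally on the basis (Y_{ij}) of the degree-one part of O_q(M_N(k)). -/

import Mathlib

/-- The images of the generators `Y_{ij}` in the free algebra. -/
def YY (k : Type) [Field k] (N : ℕ) (i j : Fin N) : FreeAlgebra k (Fin N × Fin N) :=
  FreeAlgebra.ι k (i, j)

/-- The defining relations of the single parameter quantum matrix algebra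
`O_q(M_N(k))`. -/
inductive QMatRel (k : Type) [Field k] (q : k) (N : ℕ) :
    FreeAlgebra k (Fin N × Fin N) → FreeAlgebra k (Fin N × Fin N) → Prop
  | row (i : Fin N) {j m : Fin N} (h : j < m) :
      QMatRel k q N (YY k N i j * YY k N i m) (q • (YY k N i m * YY k N i j))
  | col (j : Fin N) {i l : Fin N} (h : i < l) :
      QMatRel k q N (YY k N i j * YY k N l j) (q • (YY k N l j * YY k N i j))
  | anti {i l j m : Fin N} (h1 : i < l) (h2 : m < j) :
      QMatRel k q N (YY k N i j * YY k N l m) (YY k N l m * YY k N i j)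
  | diag {i l j m : Fin N} (h1 : i < l) (h2 : j < m) :
      QMatRel k q N (YY k N i j * YY k N l m)
        (YY k N l m * YY k N i j + (q - q⁻¹) • (YY k N i m * YY k N l j))

/-- The single parameter quantum matrix algebra `O_q(M_N(k))`. -/
abbrev QMat (k : Type) [Field k] (q : k) (N : ℕ) : Type := RingQuot (QMatRel k q N)

/-- The generators `Y_{ij}` of `O_q(M_N(k))`. -/
noncomputable def QMat.Y (k : Type) [Field k] (q : k) (N : ℕ) (i j : Fin N) : QMat k q N :=
  RingQuot.mkAlgHom k (QMatRel k q N) (YY k N i j)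

/-- The degree-one part of `O_q(M_N(k))`, i.e. the span of the generators `Y_{ij}`. -/
noncomputable def QMat.V (k : Type) [Field k] (q : k) (N : ℕ) : Submodule k (QMat k q N) :=
  Submodule.span k (Set.range fun ij : Fin N × Fin N => QMat.Y k q N ij.1 ij.2)

/-- A `k`-algebra automorphism of `O_q(M_N(k))` acts as an element of the group
`H ⋊ ⟨τ⟩`, where `H = (kˣ)^{2N-1}` consists of the diagonal automorphisms
`Y_{ij} ↦ α_{ij} Y_{ij}` for a rank-one matrix `(α_{ij}) = (a_i b_j)` with no zero
entries, and `τ` is the transposition automorphism `Y_{ij} ↦ Y_{ji}`. -/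
def ActsAsHTau (k : Type) [Field k] (q : k) (N : ℕ)
    (g : QMat k q N ≃ₐ[k] QMat k q N) : Prop :=
  ∃ a b : Fin N → k, (∀ i, a i ≠ 0) ∧ (∀ j, b j ≠ 0) ∧
    ((∀ i j, g (QMat.Y k q N i j) = (a i * b j) • QMat.Y k q N i j) ∨
     (∀ i j, g (QMat.Y k q N i j) = (a i * b j) • QMat.Y k q N j i))
/-- Action data for the generalized Taft algebra `T_n(λ, m, γ)` on a `k`-algebra `A`:
the grouplike generator `g` acts as a `k`-algebra automorphism with `g^n = 1`, the
`(g,1)`-skew-primitive generator `x` acts as a `(g,1)`-skew derivation, and the defining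
relations `g x = λ x g` and `x^m = γ(g^m - 1)` hold.  Giving such data is the same as
making `A` a left `T_n(λ, m, γ)`-module algebra. -/
structure TaftAction (k : Type) [Field k] (n m : ℕ) (lam gam : k)
    (A : Type) [Ring A] [Algebra k A] where
  g : A ≃ₐ[k] A
  x : Module.End k A
  g_pow : g ^ n = 1
  comm : ∀ a : A, g (x a) = lam • x (g a)
  skew : ∀ a b : A, x (a * b) = g a * x b + x a * b
  x_pow : (x ^ m : Module.End k A) =
      gam • ((g ^ m : A ≃ₐ[k] A).toLinearMap - LinearMap.id)

/-- Inner faithfulness of a `T_n(λ,m,γ)`-action: no nonzero Hopf ideal annihilates `A`;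
concretely, `x` acts by a nonzero operator and `g` acts by an automorphism of order
exactly `n`. -/
def TaftAction.InnerFaithful {k : Type} [Field k] {n m : ℕ} {lam gam : k}
    {A : Type} [Ring A] [Algebra k A] (T : TaftAction k n m lam gam A) : Prop :=
  T.x ≠ 0 ∧ orderOf T.g = n


/-!
Suppose `g` acts as the transposition twisted by scalars, `g(Y_ij) = α_ij Y_ji`. Then `g²`
multiplies both `Y_ij` and `Y_ji` by `α_ij α_ji`, and `g² x = λ² x g²` with `λ² ≠ 1` forces the
coefficients of `Y_ij` and `Y_ji` in `x(Y_ij)` to vanish. Any other coefficient of `x(Y_ij)` is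
killed by applying the `(g,1)`-skew derivation `x` to a `q`-commutation relation between `Y_ij`
and a generator in its row or column, and comparing coefficients of a degree-two monomial that
occurs in only one of the four resulting terms. Hence `x` vanishes on the generators, so `x = 0`.
-/

theorem skewDerivation_eq_zero_of_adjoin_eq_top {R A : Type*} [CommSemiring R] [Ring A]
    [Algebra R A] (g : A →ₐ[R] A) (x : A →ₗ[R] A)
    (hskew : ∀ a b, x (a * b) = g a * x b + x a * b) {s : Set A}
    (hs : Algebra.adjoin R s = ⊤) (hx : ∀ a ∈ s, x a = 0) : x = 0 := by
  have hx1 : x 1 = 0 := by simpa using hskew 1 1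
  ext a
  induction (hs ▸ Algebra.mem_top : a ∈ Algebra.adjoin R s) using Algebra.adjoin_induction with
  | mem a ha => exact hx a ha
  | algebraMap r => simp [Algebra.algebraMap_eq_smul_one, hx1]
  | add a b _ _ ha hb => simp [ha, hb]
  | mul a b _ _ ha hb => simp [hskew, ha, hb]

namespace QMat

variable {k : Type} [Field k] {q : k} {N : ℕ}

local notation "𝐘" => QMat.Y k q N

theorem Y_mem_V (i j : Fin N) : 𝐘 i j ∈ V k q N :=
  Submodule.subset_span ⟨(i, j), rfl⟩

theorem eqOn_V {M : Type} [AddCommGroup M] [Module k M] {f f' : QMat k q N →ₗ[k] M}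
    (h : ∀ i j, f (𝐘 i j) = f' (𝐘 i j)) {v : QMat k q N} (hv : v ∈ V k q N) : f v = f' v :=
  LinearMap.eqOn_span' (by rintro _ ⟨A, rfl⟩; exact h A.1 A.2) hv

theorem adjoin_range_Y :
    Algebra.adjoin k (Set.range fun A : Fin N × Fin N => 𝐘 A.1 A.2) = ⊤ := by
  have : (Set.range fun A : Fin N × Fin N => 𝐘 A.1 A.2) =
      RingQuot.mkAlgHom k (QMatRel k q N) '' Set.range (FreeAlgebra.ι k) := by
    rw [← Set.range_comp]; rfl
  rw [this, ← AlgHom.map_adjoin, FreeAlgebra.adjoin_range_ι, Algebra.map_top,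
    AlgHom.range_eq_top]
  exact RingQuot.mkAlgHom_surjective k _

theorem Y_mul_Y_of_lt_right (i : Fin N) {j m : Fin N} (h : j < m) :
    𝐘 i j * 𝐘 i m = q • (𝐘 i m * 𝐘 i j) := by
  have := RingQuot.mkAlgHom_rel k (QMatRel.row (q := q) i h)
  rwa [map_mul, map_smul, map_mul] at this

theorem Y_mul_Y_of_lt_left (j : Fin N) {i l : Fin N} (h : i < l) :
    𝐘 i j * 𝐘 l j = q • (𝐘 l j * 𝐘 i j) := by
  have := RingQuot.mkAlgHom_rel k (QMatRel.col (q := q) j h)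
  rwa [map_mul, map_smul, map_mul] at this

theorem exists_Y_mul_Y_eq_smul_of_row [NeZero q] (i : Fin N) {j m : Fin N} (h : j ≠ m) :
    ∃ r : k, 𝐘 i j * 𝐘 i m = r • (𝐘 i m * 𝐘 i j) := by
  rcases h.lt_or_gt with h | h
  · exact ⟨q, Y_mul_Y_of_lt_right i h⟩
  · refine ⟨q⁻¹, ?_⟩
    rw [Y_mul_Y_of_lt_right i h, smul_smul, inv_mul_cancel₀ (NeZero.ne q), one_smul]

theorem exists_Y_mul_Y_eq_smul_of_col [NeZero q] (j : Fin N) {i l : Fin N} (h : i ≠ l) :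
    ∃ r : k, 𝐘 i j * 𝐘 l j = r • (𝐘 l j * 𝐘 i j) := by
  rcases h.lt_or_gt with h | h
  · exact ⟨q, Y_mul_Y_of_lt_left j h⟩
  · refine ⟨q⁻¹, ?_⟩
    rw [Y_mul_Y_of_lt_left j h, smul_smul, inv_mul_cancel₀ (NeZero.ne q), one_smul]

def bidegree (A B : Fin N × Fin N) : Sym2 (Fin N) × Sym2 (Fin N) :=
  (s(A.1, B.1), s(A.2, B.2))

theorem bidegree_comm (A B : Fin N × Fin N) : bidegree A B = bidegree B A := by
  simp [bidegree, Sym2.eq_swap]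

theorem bidegree_left_inj {A A' B : Fin N × Fin N} :
    bidegree A B = bidegree A' B ↔ A = A' := by
  simp only [bidegree, Sym2.congr_left, Prod.ext_iff]

def orderFactor (q : k) (u v : Fin N) : k := if u < v then q else 1

def weight (q : k) (A B : Fin N × Fin N) : k := orderFactor q A.1 B.1 * orderFactor q A.2 B.2

theorem weight_ne_zero [NeZero q] (A B : Fin N × Fin N) : weight q A B ≠ 0 := by
  unfold weight orderFactor
  split_ifs <;> simp [NeZero.ne q]

/-- `O_q(M_N)` acts on this space by letting `Y_A` send `(c, v, w)` to
`(0, c e_A, ∑_B weight A B v_B e_{bidegree A B})`. Evaluating at `(1, 0, 0)` reads off the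
coefficients of an element of `V` and, up to the nonzero factor `weight A B`, those of the
degree-two monomials `Y_A Y_B`. -/
abbrev Trunc (k : Type) [Field k] (N : ℕ) : Type :=
  k × (Fin N × Fin N → k) × (Sym2 (Fin N) × Sym2 (Fin N) → k)

namespace Trunc

def genOp (q : k) (A : Fin N × Fin N) : Module.End k (Trunc k N) where
  toFun w := (0, Pi.single A w.1, ∑ B, Pi.single (bidegree A B) (weight q A B * w.2.1 B))
  map_add' v w := by simp [Pi.single_add, mul_add, Finset.sum_add_distrib]
  map_smul' c w := by ext <;> simp [Pi.single_apply, Finset.mul_sum, mul_left_comm]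

def quadOp (K : Sym2 (Fin N) × Sym2 (Fin N)) : Module.End k (Trunc k N) where
  toFun w := (0, 0, Pi.single K w.1)
  map_add' v w := by simp [Pi.single_add]
  map_smul' c w := by ext <;> simp [Pi.single_apply]

theorem genOp_mul_genOp (A B : Fin N × Fin N) :
    genOp q A * genOp q B = weight q A B • quadOp (bidegree A B) := by
  refine LinearMap.ext fun w => ?_
  simp only [Module.End.mul_apply, LinearMap.smul_apply, genOp, quadOp, LinearMap.coe_mk,
    AddHom.coe_mk, Pi.single_zero, Prod.smul_mk, smul_zero]
  rw [Finset.sum_eq_single B (fun C _ hC => by simp [hC]) (by simp)]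
  simp [← Pi.single_smul']

theorem lift_genOp_of_rel [NeZero q] {u v : FreeAlgebra k (Fin N × Fin N)}
    (h : QMatRel k q N u v) :
    FreeAlgebra.lift k (genOp q) u = FreeAlgebra.lift k (genOp q) v := by
  cases h with
  | row i h =>
    rw [YY, YY, map_mul, map_smul, map_mul, FreeAlgebra.lift_ι_apply, FreeAlgebra.lift_ι_apply,
      genOp_mul_genOp, genOp_mul_genOp, smul_smul, bidegree_comm (i, _)]
    simp [weight, orderFactor, h, h.not_gt]
  | col j h =>
    rw [YY, YY, map_mul, map_smul, map_mul, FreeAlgebra.lift_ι_apply, FreeAlgebra.lift_ι_apply,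
      genOp_mul_genOp, genOp_mul_genOp, smul_smul, bidegree_comm (_, j)]
    simp [weight, orderFactor, h, h.not_gt]
  | anti h1 h2 =>
    rw [YY, YY, map_mul, map_mul, FreeAlgebra.lift_ι_apply, FreeAlgebra.lift_ι_apply,
      genOp_mul_genOp, genOp_mul_genOp, bidegree_comm (_, _)]
    simp [weight, orderFactor, h1, h2, h1.not_gt, h2.not_gt]
  | @diag i l j m h1 h2 =>
    have hbd : bidegree (i, m) (l, j) = bidegree (i, j) (l, m) := by
      simp [bidegree, Sym2.eq_swap]
    simp only [YY, map_mul, map_add, map_smul, FreeAlgebra.lift_ι_apply, genOp_mul_genOp,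
      smul_smul, hbd, bidegree_comm (l, m), ← add_smul]
    congr 1
    simp only [weight, orderFactor, h1, h2, h1.not_gt, h2.not_gt, if_true, if_false]
    field_simp [NeZero.ne q]
    ring

def rep [NeZero q] : QMat k q N →ₐ[k] Module.End k (Trunc k N) :=
  RingQuot.liftAlgHom k ⟨FreeAlgebra.lift k (genOp q), fun _ _ => lift_genOp_of_rel⟩

theorem rep_Y [NeZero q] (i j : Fin N) : rep (𝐘 i j) = genOp q (i, j) := by
  rw [QMat.Y, rep, RingQuot.liftAlgHom_mkAlgHom_apply, YY, FreeAlgebra.lift_ι_apply]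

end Trunc

section Coefficients

variable [NeZero q]

def coeff (A : Fin N × Fin N) : QMat k q N →ₗ[k] k where
  toFun v := (Trunc.rep v (1, 0, 0)).2.1 A
  map_add' u v := by simp
  map_smul' c v := by simp

def coeff₂ (K : Sym2 (Fin N) × Sym2 (Fin N)) : QMat k q N →ₗ[k] k where
  toFun v := (Trunc.rep v (1, 0, 0)).2.2 K
  map_add' u v := by simp
  map_smul' c v := by simp

theorem coeff_Y (A : Fin N × Fin N) (i j : Fin N) :
    coeff A (𝐘 i j) = if (i, j) = A then 1 else 0 := by
  simp [coeff, Trunc.rep_Y, Trunc.genOp, Pi.single_apply, eq_comm]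

theorem coeff₂_Y_mul_Y (K : Sym2 (Fin N) × Sym2 (Fin N)) (A B : Fin N × Fin N) :
    coeff₂ K (𝐘 A.1 A.2 * 𝐘 B.1 B.2) = if bidegree A B = K then weight q A B else 0 := by
  simp [coeff₂, Trunc.rep_Y, Trunc.genOp_mul_genOp, Trunc.quadOp, Pi.single_apply, eq_comm]

theorem eq_sum_coeff_smul_Y {v : QMat k q N} (hv : v ∈ V k q N) :
    v = ∑ A, coeff A v • 𝐘 A.1 A.2 := by
  simpa using eqOn_V (f := LinearMap.id) (f' := ∑ A, (coeff A).smulRight (𝐘 A.1 A.2))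
    (fun i j => by simp [coeff_Y, ite_smul]) hv

theorem coeff₂_Y_mul_eq_zero {K : Sym2 (Fin N) × Sym2 (Fin N)} {A : Fin N × Fin N}
    (h : ∀ p, bidegree A p ≠ K) {v : QMat k q N} (hv : v ∈ V k q N) :
    coeff₂ K (𝐘 A.1 A.2 * v) = 0 :=
  eqOn_V (f := coeff₂ K ∘ₗ LinearMap.mulLeft k (𝐘 A.1 A.2)) (f' := 0)
    (fun i j => by simpa using coeff₂_Y_mul_Y K A (i, j) |>.trans (if_neg (h _))) hv

theorem coeff₂_mul_Y_eq_zero {K : Sym2 (Fin N) × Sym2 (Fin N)} {B : Fin N × Fin N}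
    (h : ∀ p, bidegree p B ≠ K) {v : QMat k q N} (hv : v ∈ V k q N) :
    coeff₂ K (v * 𝐘 B.1 B.2) = 0 :=
  eqOn_V (f := coeff₂ K ∘ₗ LinearMap.mulRight k (𝐘 B.1 B.2)) (f' := 0)
    (fun i j => by simpa using coeff₂_Y_mul_Y K (i, j) B |>.trans (if_neg (h _))) hv

theorem coeff₂_bidegree_mul_Y (p B : Fin N × Fin N) {v : QMat k q N} (hv : v ∈ V k q N) :
    coeff₂ (bidegree p B) (v * 𝐘 B.1 B.2) = weight q p B * coeff p v :=
  (eqOn_V (f := coeff₂ (bidegree p B) ∘ₗ LinearMap.mulRight k (𝐘 B.1 B.2))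
    (f' := weight q p B • coeff p) (fun i j => by
      have := coeff₂_Y_mul_Y (q := q) (bidegree p B) (i, j) B
      simp only [bidegree_left_inj] at this
      split_ifs at this with h <;> simp [this, coeff_Y, h]) hv).trans
    (LinearMap.smul_apply _ _ _)

end Coefficients

section Transpose

variable {g : QMat k q N →ₐ[k] QMat k q N} {x : Module.End k (QMat k q N)}
  {α : Fin N → Fin N → k}

theorem map_mem_V_of_map_Y (hgY : ∀ i j, g (𝐘 i j) = α i j • 𝐘 j i) {v : QMat k q N}
    (hv : v ∈ V k q N) : g v ∈ V k q N := by
  refine (Submodule.span_le (p := (V k q N).comap g.toLinearMap)).2 ?_ hv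
  rintro _ ⟨A, rfl⟩
  simpa [hgY] using (V k q N).smul_mem _ (Y_mem_V A.2 A.1)

variable [NeZero q]

theorem coeff_map_of_map_Y (hgY : ∀ i j, g (𝐘 i j) = α i j • 𝐘 j i) {v : QMat k q N}
    (hv : v ∈ V k q N) (i j : Fin N) : coeff (i, j) (g v) = α j i * coeff (j, i) v :=
  (eqOn_V (f := coeff (i, j) ∘ₗ g.toLinearMap) (f' := α j i • coeff (j, i)) (fun u v => by
    simp only [LinearMap.comp_apply, AlgHom.toLinearMap_apply, hgY, map_smul, coeff_Y,
      LinearMap.smul_apply, Prod.mk.injEq, smul_eq_mul]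
    split_ifs <;> grind) hv).trans (LinearMap.smul_apply _ _ _)

/-- `hA`, `hB` and `hBA` say that of the four terms obtained by expanding both sides of
`x (Y_A Y_B) = r • x (Y_B Y_A)` with the skew Leibniz rule, only `x (Y_A) * Y_B` has a component
in the bidegree of `Y_p Y_B`. -/
theorem coeff_eq_zero_of_isolated (hskew : ∀ u v, x (u * v) = g u * x v + x u * v)
    (hgY : ∀ i j, g (𝐘 i j) = α i j • 𝐘 j i) (hxV : ∀ v ∈ V k q N, x v ∈ V k q N)
    {A B : Fin N × Fin N} (hAB : ∃ r : k, 𝐘 A.1 A.2 * 𝐘 B.1 B.2 = r • (𝐘 B.1 B.2 * 𝐘 A.1 A.2))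
    (p : Fin N × Fin N) (hA : ∀ p', bidegree A.swap p' ≠ bidegree p B)
    (hB : ∀ p', bidegree B.swap p' ≠ bidegree p B) (hBA : ∀ p', bidegree p' A ≠ bidegree p B) :
    coeff p (x (𝐘 A.1 A.2)) = 0 := by
  obtain ⟨r, hr⟩ := hAB
  have hx : ∀ C : Fin N × Fin N, x (𝐘 C.1 C.2) ∈ V k q N := fun C => hxV _ (Y_mem_V _ _)
  have hA0 : coeff₂ (bidegree p B) (𝐘 A.2 A.1 * x (𝐘 B.1 B.2)) = 0 :=
    coeff₂_Y_mul_eq_zero (A := A.swap) hA (hx B)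
  have hB0 : coeff₂ (bidegree p B) (𝐘 B.2 B.1 * x (𝐘 A.1 A.2)) = 0 :=
    coeff₂_Y_mul_eq_zero (A := B.swap) hB (hx A)
  have key := congrArg (coeff₂ (bidegree p B) ∘ x) hr
  simp only [Function.comp_apply, map_smul, hskew, hgY, smul_mul_assoc, map_add, hA0, hB0,
    coeff₂_bidegree_mul_Y p B (hx A), coeff₂_mul_Y_eq_zero hBA (hx B), smul_eq_mul, mul_zero,
    zero_add] at key
  exact (mul_eq_zero.1 key).resolve_left (weight_ne_zero p B)

theorem coeff_eq_zero_of_sym2_eq {lam : k} (hlam : lam ^ 2 ≠ 1) (hα : ∀ i j, α i j ≠ 0)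
    (hgY : ∀ i j, g (𝐘 i j) = α i j • 𝐘 j i) (hcomm : ∀ v, g (x v) = lam • x (g v))
    (hxV : ∀ v ∈ V k q N, x v ∈ V k q N) {i j u v : Fin N} (h : s(u, v) = s(i, j)) :
    coeff (u, v) (x (𝐘 i j)) = 0 := by
  have hw := hxV _ (Y_mem_V i j)
  have hgg : g (g (x (𝐘 i j))) = (lam ^ 2 * (α i j * α j i)) • x (𝐘 i j) := by
    simp only [hcomm, hgY, map_smul, smul_smul]
    ring_nf
  have key := congrArg (coeff (u, v)) hgg
  rw [coeff_map_of_map_Y hgY (map_mem_V_of_map_Y hgY hw), coeff_map_of_map_Y hgY hw, map_smul,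
    smul_eq_mul] at key
  have hμ : α v u * α u v = α i j * α j i := by
    rcases Sym2.eq_iff.1 h with ⟨rfl, rfl⟩ | ⟨rfl, rfl⟩ <;> ring
  have : ((1 - lam ^ 2) * (α i j * α j i)) * coeff (u, v) (x (𝐘 i j)) = 0 := by
    linear_combination key - coeff (u, v) (x (𝐘 i j)) * hμ
  refine (mul_eq_zero.1 this).resolve_left (mul_ne_zero ?_ (mul_ne_zero (hα i j) (hα j i)))
  exact sub_ne_zero.2 (Ne.symm hlam)

theorem coeff_apply_Y_eq_zero (hN : 2 < N) {lam : k} (hlam : lam ^ 2 ≠ 1)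
    (hα : ∀ i j, α i j ≠ 0) (hgY : ∀ i j, g (𝐘 i j) = α i j • 𝐘 j i)
    (hcomm : ∀ v, g (x v) = lam • x (g v)) (hskew : ∀ u v, x (u * v) = g u * x v + x u * v)
    (hxV : ∀ v ∈ V k q N, x v ∈ V k q N) (i j s t : Fin N) :
    coeff (s, t) (x (𝐘 i j)) = 0 := by
  by_cases hst : s(s, t) = s(i, j)
  · exact coeff_eq_zero_of_sym2_eq hlam hα hgY hcomm hxV hst
  rw [Sym2.eq_iff] at hst
  -- `Y_st` is isolated against a partner of `Y_ij` in its row or column; when `s = t`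
  -- the partner needs a third index.
  by_cases ht : t = i ∨ t = j
  · by_cases hs : s = i ∨ s = j
    · obtain ⟨m, hmi, hmj⟩ := Fin.exists_ne_and_ne_of_two_lt i j hN
      obtain ⟨hs, ht⟩ | ⟨hs, ht⟩ : (s = i ∧ t = i) ∨ (s = j ∧ t = j) := by grind
      · rw [hs, ht]
        refine coeff_eq_zero_of_isolated (A := (i, j)) (B := (i, m)) hskew hgY hxV
          (exists_Y_mul_Y_eq_smul_of_row i hmj.symm) _ ?_ ?_ ?_ <;> simp [bidegree] <;> grind
      · rw [hs, ht]
        refine coeff_eq_zero_of_isolated (A := (i, j)) (B := (m, j)) hskew hgY hxV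
          (exists_Y_mul_Y_eq_smul_of_col j hmi.symm) _ ?_ ?_ ?_ <;> simp [bidegree] <;> grind
    · refine coeff_eq_zero_of_isolated (A := (i, j)) (B := (s, j)) hskew hgY hxV
        (exists_Y_mul_Y_eq_smul_of_col j (by grind)) _ ?_ ?_ ?_ <;> simp [bidegree] <;> grind
  · refine coeff_eq_zero_of_isolated (A := (i, j)) (B := (i, t)) hskew hgY hxV
      (exists_Y_mul_Y_eq_smul_of_row i (by grind)) _ ?_ ?_ ?_ <;> simp [bidegree] <;> grind

theorem skewDerivation_eq_zero_of_transpose (hN : 2 < N) {lam : k} (hlam : lam ^ 2 ≠ 1)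
    (hα : ∀ i j, α i j ≠ 0) (hgY : ∀ i j, g (𝐘 i j) = α i j • 𝐘 j i)
    (hcomm : ∀ v, g (x v) = lam • x (g v)) (hskew : ∀ u v, x (u * v) = g u * x v + x u * v)
    (hxV : ∀ v ∈ V k q N, x v ∈ V k q N) : x = 0 := by
  refine skewDerivation_eq_zero_of_adjoin_eq_top g x hskew adjoin_range_Y ?_
  rintro _ ⟨⟨i, j⟩, rfl⟩
  rw [eq_sum_coeff_smul_Y (hxV _ (Y_mem_V i j))]
  exact Finset.sum_eq_zero fun A _ => by
    rw [coeff_apply_Y_eq_zero hN hlam hα hgY hcomm hskew hxV, zero_smul]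

end Transpose

end QMat

theorem stmt_13_general {k : Type} [Field k] {q : k} (hq0 : q ≠ 0)
    {N : ℕ} (hN : 3 ≤ N)
    {n m : ℕ} (hm3 : 3 ≤ m) {lam : k} (hlam : IsPrimitiveRoot lam m)
    (T : TaftAction k n m lam 0 (QMat k q N))
    (hg : ActsAsHTau k q N T.g)
    (hxlin : ∀ a ∈ QMat.V k q N, T.x a ∈ QMat.V k q N)
    (hx0 : T.x ≠ 0) :
    ∃ a b : Fin N → k, (∀ i, a i ≠ 0) ∧ (∀ j, b j ≠ 0) ∧
      ∀ i j, T.g (QMat.Y k q N i j) = (a i * b j) • QMat.Y k q N i j := by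
  obtain ⟨a, b, ha, hb, hdiagonal | htranspose⟩ := hg
  · exact ⟨a, b, ha, hb, hdiagonal⟩
  have : NeZero q := ⟨hq0⟩
  have hlam2 : lam ^ 2 ≠ 1 := fun h => by
    have := Nat.le_of_dvd two_pos ((hlam.pow_eq_one_iff_dvd 2).1 h)
    omega
  exact absurd (QMat.skewDerivation_eq_zero_of_transpose (g := T.g.toAlgHom) hN hlam2
    (fun i j => mul_ne_zero (ha i) (hb j)) htranspose T.comm T.skew hxlin) hx0

/-- Let `q ∈ kˣ` with `q ≠ ±1`, and let `N ≥ 3` and `m ≥ 3`.  If the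
generalized Taft algebra `T_n(λ,m,0)` acts on `O_q(M_N(k))` with `x` acting linearly and
nonzero, and with `g` acting as an element of `H ⋊ ⟨τ⟩`, then `g` must act as an element
of `H`, i.e. diagonally on the basis `(Y_{ij})` of the degree-one part of
`O_q(M_N(k))`. -/
theorem stmt_13 {k : Type} [Field k] {q : k} (hq0 : q ≠ 0) (hq1 : q ≠ 1) (hq1' : q ≠ -1)
    {N : ℕ} (hN : 3 ≤ N)
    {n m : ℕ} (hm3 : 3 ≤ m) (hmn : m ∣ n) {lam : k} (hlam : IsPrimitiveRoot lam m)
    (T : TaftAction k n m lam 0 (QMat k q N))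
    (hg : ActsAsHTau k q N T.g)
    (hxlin : ∀ a ∈ QMat.V k q N, T.x a ∈ QMat.V k q N)
    (hx0 : T.x ≠ 0) :
    ∃ a b : Fin N → k, (∀ i, a i ≠ 0) ∧ (∀ j, b j ≠ 0) ∧
      ∀ i j, T.g (QMat.Y k q N i j) = (a i * b j) • QMat.Y k q N i j :=
  stmt_13_general hq0 hN hm3 hlam T hg hxlin hx0
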